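/- For any two tuples of integers a = (a_1, ..., a_n) with a_1 ≥ ... ≥ a_n and a' = (a'_1, ..., a'_n) with a'_1 ≥ ... ≥ a'_n, the double cosets commute as subsets of GL_n(ℚ_p): (I d_a I) · (I d_{a'} I) = (I d_{a'} I) · (I d_a I). (This expresses the commutativity of the Atkin–Lehner subalgebra ℋ_p of the Iwahori–Hecke algebra.) -/

import Mathlib

open Pointwise

/-- The Iwahori subgroup of `GL_n(ℚ_p)`: matrices with entries in `ℤ_p`, determinant a
`p`-adic unit, and entries strictly below the diagonal in `pℤ_p`. -/
def Iwahori (p : ℕ) [Fact p.Prime] (n : ℕ) :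
    Set (Matrix.GeneralLinearGroup (Fin n) ℚ_[p]) :=
  {g | (∀ i j : Fin n, ‖(g : Matrix (Fin n) (Fin n) ℚ_[p]) i j‖ ≤ 1) ∧
    ‖(g : Matrix (Fin n) (Fin n) ℚ_[p]).det‖ = 1 ∧
    ∀ i j : Fin n, j < i → ‖(g : Matrix (Fin n) (Fin n) ℚ_[p]) i j‖ < 1}

/-- The diagonal matrix `diag(p^{a_1}, ..., p^{a_n})` as an element of `GL_n(ℚ_p)`. -/
noncomputable def dGL (p : ℕ) [Fact p.Prime] (n : ℕ) (a : Fin n → ℤ) :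
    Matrix.GeneralLinearGroup (Fin n) ℚ_[p] :=
  Matrix.GeneralLinearGroup.mkOfDetNeZero
    (Matrix.diagonal fun i => (p : ℚ_[p]) ^ (a i))
    (by
      rw [Matrix.det_diagonal]
      exact Finset.prod_ne_zero_iff.2 fun i _ =>
        zpow_ne_zero _ (Nat.cast_ne_zero.mpr (Fact.out : p.Prime).ne_zero))

/-!
For `M` with entries in `ℤ_p` whose reduction mod `p` is upper triangular, `det M ≡ ∏ M i i`
mod `p`, so `M ∈ I` exactly when the diagonal entries are units. Every `g ∈ I` factors as
`g = b * v` with `b, v ∈ I`, `b` upper and `v` lower triangular: split off the first row and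
column and take the Schur complement of the lower-right block, which factors by induction.
Conjugation by `d_c` multiplies the entry `(i, j)` by `p^(c i - c j)`, so for decreasing `a`
and `a'` both `d_a b d_a⁻¹` and `d_{a'}⁻¹ v d_{a'}` lie in `I`. Hence
`d_a g d_{a'} ∈ I d_{a+a'} I`, that is `(I d_a I) (I d_{a'} I) = I d_{a+a'} I`, and the right
hand side is symmetric in `a` and `a'`.
-/

open Matrix Finset

section Ultrametric

variable {E : Type*} [SeminormedAddCommGroup E] [IsUltrametricDist E]

theorem IsUltrametricDist.norm_sum_lt_of_forall_lt {ι : Type*} {s : Finset ι} {f : ι → E}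
    {C : ℝ} (hC : 0 < C) (h : ∀ i ∈ s, ‖f i‖ < C) : ‖∑ i ∈ s, f i‖ < C := by
  rcases s.eq_empty_or_nonempty with rfl | hs
  · simpa using hC
  · exact (hs.norm_sum_le_sup'_norm f).trans_lt ((Finset.sup'_lt_iff hs).2 h)

theorem IsUltrametricDist.norm_eq_of_norm_sub_lt {x y : E} (h : ‖x - y‖ < ‖x‖) :
    ‖y‖ = ‖x‖ := by
  have := norm_add_eq_max_of_norm_ne_norm (x := x) (y := y - x)
    (by rw [norm_sub_rev]; exact h.ne')
  rwa [add_sub_cancel, max_eq_left (by rw [norm_sub_rev]; exact h.le)] at this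

end Ultrametric

theorem Equiv.Perm.exists_lt_apply_of_ne_one {α : Type*} [Finite α] [LinearOrder α]
    {σ : Equiv.Perm α} (hσ : σ ≠ 1) : ∃ i, i < σ i := by
  by_contra! h
  refine hσ (Equiv.ext fun i => ?_)
  induction i using WellFoundedLT.induction with
  | ind i ih =>
    by_contra hne
    exact hne (σ.injective (ih _ ((h i).lt_of_ne hne)))

theorem Padic.p_ne_zero (p : ℕ) [Fact p.Prime] : (p : ℚ_[p]) ≠ 0 :=
  Nat.cast_ne_zero.2 (Fact.out : p.Prime).ne_zero

namespace Matrix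

open IsUltrametricDist

section Ultrametric

variable {K : Type*} [NormedField K] [IsUltrametricDist K] {ι : Type*} [Fintype ι]

theorem norm_dotProduct_le_one {x y : ι → K} (hx : ∀ i, ‖x i‖ ≤ 1) (hy : ∀ i, ‖y i‖ ≤ 1) :
    ‖x ⬝ᵥ y‖ ≤ 1 :=
  norm_sum_le_of_forall_le_of_nonneg zero_le_one fun i _ => by
    rw [norm_mul]; exact mul_le_one₀ (hx i) (norm_nonneg _) (hy i)

theorem norm_dotProduct_lt_one {x y : ι → K} (hx : ∀ i, ‖x i‖ ≤ 1) (hy : ∀ i, ‖y i‖ < 1) :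
    ‖x ⬝ᵥ y‖ < 1 :=
  norm_sum_lt_of_forall_lt one_pos fun i _ => by
    rw [norm_mul]; exact mul_lt_one_of_nonneg_of_lt_one_right (hx i) (norm_nonneg _) (hy i)

theorem norm_det_le_one [DecidableEq ι] {M : Matrix ι ι K} (hM : ∀ i j, ‖M i j‖ ≤ 1) :
    ‖M.det‖ ≤ 1 := by
  rw [det_apply']
  refine norm_sum_le_of_forall_le_of_nonneg zero_le_one fun σ _ => ?_
  rw [norm_mul, norm_prod]
  exact mul_le_one₀ (norm_intCast_le_one K _) (by positivity)
    (Finset.prod_le_one (fun _ _ => norm_nonneg _) fun i _ => hM _ _)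

theorem norm_inv_apply_le_one [DecidableEq ι] {M : Matrix ι ι K} (hM : ∀ i j, ‖M i j‖ ≤ 1)
    (hdet : ‖M.det‖ = 1) (i j : ι) : ‖M⁻¹ i j‖ ≤ 1 := by
  rw [inv_def, Ring.inverse_eq_inv', smul_apply, smul_eq_mul, norm_mul, norm_inv, hdet,
    inv_one, one_mul, adjugate_apply]
  refine norm_det_le_one fun k l => ?_
  rw [updateRow_apply]
  split_ifs
  · rw [Pi.single_apply]; split_ifs <;> simp
  · exact hM k l

variable [LinearOrder ι]

theorem norm_det_sub_prod_diag_lt_one {M : Matrix ι ι K} (h1 : ∀ i j, ‖M i j‖ ≤ 1)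
    (h2 : ∀ i j, j < i → ‖M i j‖ < 1) : ‖M.det - ∏ i, M i i‖ < 1 := by
  rw [det_apply', ← Finset.add_sum_erase _ _ (Finset.mem_univ 1)]
  simp only [Equiv.Perm.sign_one, Units.val_one, Int.cast_one, Equiv.Perm.one_apply, one_mul,
    add_sub_cancel_left]
  refine norm_sum_lt_of_forall_lt one_pos fun σ hσ => ?_
  obtain ⟨i₀, hi₀⟩ := Equiv.Perm.exists_lt_apply_of_ne_one (Finset.ne_of_mem_erase hσ)
  rw [norm_mul, norm_prod, ← Finset.mul_prod_erase _ _ (Finset.mem_univ i₀)]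
  calc _ ≤ 1 * (‖M (σ i₀) i₀‖ * 1) := by
        gcongr
        · exact norm_intCast_le_one K _
        · exact Finset.prod_le_one (fun _ _ => norm_nonneg _) fun i _ => h1 _ _
    _ < 1 := by simpa using h2 _ _ hi₀

theorem norm_det_eq_one_iff {M : Matrix ι ι K} (h1 : ∀ i j, ‖M i j‖ ≤ 1)
    (h2 : ∀ i j, j < i → ‖M i j‖ < 1) : ‖M.det‖ = 1 ↔ ∀ i, ‖M i i‖ = 1 := by
  have hsub := norm_det_sub_prod_diag_lt_one h1 h2
  have hprod : ‖M.det‖ = 1 ↔ ‖∏ i, M i i‖ = 1 := by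
    constructor <;> intro h
    · exact (norm_eq_of_norm_sub_lt (h ▸ hsub)).trans h
    · rw [norm_sub_rev] at hsub; exact (norm_eq_of_norm_sub_lt (h ▸ hsub)).trans h
  rw [hprod, ← coe_nnnorm, NNReal.coe_eq_one, nnnorm_prod,
    Finset.prod_eq_one_iff_of_le_one' fun i _ => mod_cast h1 i i]
  simp [← NNReal.coe_eq_one]

end Ultrametric

variable {K : Type*} [NormedField K] {ι : Type*} [LinearOrder ι]

structure IsIwahori (M : Matrix ι ι K) : Prop where
  norm_le_one : ∀ i j, ‖M i j‖ ≤ 1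
  norm_lt_one : ∀ i j, j < i → ‖M i j‖ < 1
  norm_diag : ∀ i, ‖M i i‖ = 1

namespace IsIwahori

theorem one : (1 : Matrix ι ι K).IsIwahori where
  norm_le_one i j := by rw [one_apply]; split_ifs <;> simp
  norm_lt_one i j h := by simp [one_apply_ne h.ne']
  norm_diag i := by simp

variable [Fintype ι] [IsUltrametricDist K]

theorem norm_det {M : Matrix ι ι K} (hM : M.IsIwahori) : ‖M.det‖ = 1 :=
  (norm_det_eq_one_iff hM.norm_le_one hM.norm_lt_one).2 hM.norm_diag

theorem of_norm_det {M : Matrix ι ι K} (h1 : ∀ i j, ‖M i j‖ ≤ 1)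
    (h2 : ∀ i j, j < i → ‖M i j‖ < 1) (hdet : ‖M.det‖ = 1) : M.IsIwahori :=
  ⟨h1, h2, (norm_det_eq_one_iff h1 h2).1 hdet⟩

theorem isUnit_det {M : Matrix ι ι K} (hM : M.IsIwahori) : IsUnit M.det :=
  isUnit_iff_ne_zero.2 (norm_ne_zero_iff.1 (by rw [hM.norm_det]; exact one_ne_zero))

theorem norm_inv_apply_le_one {M : Matrix ι ι K} (hM : M.IsIwahori) (i j : ι) :
    ‖M⁻¹ i j‖ ≤ 1 :=
  Matrix.norm_inv_apply_le_one hM.norm_le_one hM.norm_det i j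

theorem mul {M N : Matrix ι ι K} (hM : M.IsIwahori) (hN : N.IsIwahori) :
    (M * N).IsIwahori := by
  refine of_norm_det (fun i j => ?_) (fun i j hij => ?_) ?_
  · exact norm_dotProduct_le_one (fun k => hM.norm_le_one i k) fun k => hN.norm_le_one k j
  · refine norm_sum_lt_of_forall_lt one_pos fun k _ => ?_
    rw [norm_mul]
    rcases lt_or_ge j k with hjk | hkj
    · exact mul_lt_one_of_nonneg_of_lt_one_right (hM.norm_le_one i k) (norm_nonneg _)
        (hN.norm_lt_one k j hjk)
    · exact mul_lt_one_of_nonneg_of_lt_one_left (norm_nonneg _)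
        (hM.norm_lt_one i k (hkj.trans_lt hij)) (hN.norm_le_one k j)
  · rw [det_mul, norm_mul, hM.norm_det, hN.norm_det, one_mul]

end IsIwahori

section BlockCons

variable {R : Type*} {n : ℕ}

def blockCons (a : R) (r c : Fin n → R) (D : Matrix (Fin n) (Fin n) R) :
    Matrix (Fin (n + 1)) (Fin (n + 1)) R :=
  of (Fin.cons (Fin.cons a r) fun i => Fin.cons (c i) (D i))

section Apply

variable (a : R) (r c : Fin n → R) (D : Matrix (Fin n) (Fin n) R) (i j : Fin n)

@[simp] theorem blockCons_zero_zero : blockCons a r c D 0 0 = a := rfl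
@[simp] theorem blockCons_zero_succ : blockCons a r c D 0 j.succ = r j := rfl
@[simp] theorem blockCons_succ_zero : blockCons a r c D i.succ 0 = c i := rfl
@[simp] theorem blockCons_succ_succ : blockCons a r c D i.succ j.succ = D i j := rfl

end Apply

theorem eq_blockCons (M : Matrix (Fin (n + 1)) (Fin (n + 1)) R) :
    M = blockCons (M 0 0) (fun j => M 0 j.succ) (fun i => M i.succ 0)
      (M.submatrix Fin.succ Fin.succ) := by
  ext i j
  induction i using Fin.cases <;> induction j using Fin.cases <;> rfl

theorem blockCons_mul_blockCons [CommRing R] (a a' : R) (r c r' c' : Fin n → R)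
    (D D' : Matrix (Fin n) (Fin n) R) :
    blockCons a r c D * blockCons a' r' c' D' =
      blockCons (a * a' + r ⬝ᵥ c') (a • r' + r ᵥ* D') (a' • c + D *ᵥ c')
        (vecMulVec c r' + D * D') := by
  ext i j
  induction i using Fin.cases <;> induction j using Fin.cases <;>
    simp [mul_apply, Fin.sum_univ_succ, dotProduct, vecMul, mulVec, vecMulVec, mul_comm]

theorem IsUpperTriangular.blockCons [Zero R] {D : Matrix (Fin n) (Fin n) R}
    (hD : D.IsUpperTriangular) (a : R) (r : Fin n → R) :
    (blockCons a r 0 D).IsUpperTriangular := by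
  intro i j hij
  induction i using Fin.cases with
  | zero => exact absurd hij (Fin.not_lt_zero j)
  | succ i =>
    induction j using Fin.cases with
    | zero => rfl
    | succ j => exact hD (Fin.succ_lt_succ_iff.1 hij)

theorem IsLowerTriangular.blockCons [Zero R] {D : Matrix (Fin n) (Fin n) R}
    (hD : D.IsLowerTriangular) (a : R) (c : Fin n → R) :
    (blockCons a 0 c D).IsLowerTriangular := by
  intro i j hij
  induction j using Fin.cases with
  | zero => exact absurd hij (Fin.not_lt_zero i)
  | succ j =>
    induction i using Fin.cases with
    | zero => rfl
    | succ i => exact hD (Fin.succ_lt_succ_iff.1 hij)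

theorem isIwahori_blockCons_iff (a : K) (r c : Fin n → K) (D : Matrix (Fin n) (Fin n) K) :
    (blockCons a r c D).IsIwahori ↔
      ‖a‖ = 1 ∧ (∀ j, ‖r j‖ ≤ 1) ∧ (∀ i, ‖c i‖ < 1) ∧ D.IsIwahori := by
  constructor
  · intro h
    exact ⟨h.norm_diag 0, fun j => h.norm_le_one 0 j.succ,
      fun i => h.norm_lt_one i.succ 0 i.succ_pos, ⟨fun i j => h.norm_le_one i.succ j.succ,
      fun i j hij => h.norm_lt_one i.succ j.succ (Fin.succ_lt_succ_iff.2 hij),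
      fun i => h.norm_diag i.succ⟩⟩
  · rintro ⟨ha, hr, hc, hD⟩
    refine ⟨fun i j => ?_, fun i j hij => ?_, fun i => ?_⟩
    · induction i using Fin.cases <;> induction j using Fin.cases <;>
        simp [ha, hr, (hc _).le, hD.norm_le_one]
    · induction i using Fin.cases with
      | zero => exact absurd hij (Fin.not_lt_zero j)
      | succ i =>
        induction j using Fin.cases with
        | zero => exact hc i
        | succ j => exact hD.norm_lt_one i j (Fin.succ_lt_succ_iff.1 hij)
    · induction i using Fin.cases <;> simp [ha, hD.norm_diag]

end BlockCons

section Factorization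

variable [IsUltrametricDist K]

theorem exists_upper_mul_lower_blockCons {n : ℕ} {a : K} {r c : Fin n → K}
    {B V : Matrix (Fin n) (Fin n) K} (ha : ‖a‖ = 1) (hr : ∀ j, ‖r j‖ ≤ 1) (hc : ∀ i, ‖c i‖ < 1)
    (hB : B.IsIwahori) (hBu : B.IsUpperTriangular) (hV : V.IsIwahori)
    (hVl : V.IsLowerTriangular) :
    ∃ b v : Matrix (Fin (n + 1)) (Fin (n + 1)) K, b.IsIwahori ∧ b.IsUpperTriangular ∧
      v.IsIwahori ∧ v.IsLowerTriangular ∧ blockCons a r c (B * V) = b * v := by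
  set c' := B⁻¹ *ᵥ c
  set r' := r ᵥ* V⁻¹
  have hc' : ∀ i, ‖c' i‖ < 1 := fun i => norm_dotProduct_lt_one (hB.norm_inv_apply_le_one i) hc
  have hr' : ∀ j, ‖r' j‖ ≤ 1 := fun j =>
    norm_dotProduct_le_one hr fun k => hV.norm_inv_apply_le_one k j
  have ha' : ‖a - r' ⬝ᵥ c'‖ = 1 := by
    rw [← ha]
    refine norm_eq_of_norm_sub_lt ?_
    rw [sub_sub_cancel, ha]
    exact norm_dotProduct_lt_one hr' hc'
  refine ⟨blockCons (a - r' ⬝ᵥ c') r' 0 B, blockCons 1 0 c' V,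
    (isIwahori_blockCons_iff _ _ _ _).2 ⟨ha', hr', by simp, hB⟩, hBu.blockCons _ _,
    (isIwahori_blockCons_iff _ _ _ _).2 ⟨by simp, by simp, hc', hV⟩, hVl.blockCons _ _, ?_⟩
  rw [blockCons_mul_blockCons, mulVec_mulVec, mul_nonsing_inv _ hB.isUnit_det,
    vecMul_vecMul, nonsing_inv_mul _ hV.isUnit_det]
  simp

theorem IsIwahori.exists_upper_mul_lower :
    ∀ {n : ℕ} {M : Matrix (Fin n) (Fin n) K}, M.IsIwahori →
      ∃ b v : Matrix (Fin n) (Fin n) K, b.IsIwahori ∧ b.IsUpperTriangular ∧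
        v.IsIwahori ∧ v.IsLowerTriangular ∧ M = b * v
  | 0, M, _ => ⟨1, 1, .one, blockTriangular_one, .one, blockTriangular_one,
      Subsingleton.elim _ _⟩
  | n + 1, M, hM => by
    rw [eq_blockCons M, isIwahori_blockCons_iff] at hM
    obtain ⟨ha, hr, hc, hD⟩ := hM
    obtain ⟨B, V, hB, hBu, hV, hVl, hBV⟩ := hD.exists_upper_mul_lower
    rw [eq_blockCons M, hBV]
    exact exists_upper_mul_lower_blockCons ha hr hc hB hBu hV hVl

end Factorization

section Padic

variable {p : ℕ} [Fact p.Prime] {ι : Type*} [Fintype ι] [LinearOrder ι]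

theorem norm_zpow_mul_mul_zpow_neg_le {k l : ℤ} (h : l ≤ k) (x : ℚ_[p]) :
    ‖(p : ℚ_[p]) ^ k * x * (p : ℚ_[p]) ^ (-l)‖ ≤ ‖x‖ := by
  rw [norm_mul, norm_mul, Padic.norm_p_zpow, Padic.norm_p_zpow, neg_neg, mul_right_comm,
    ← zpow_add₀ (by exact_mod_cast (Fact.out : p.Prime).ne_zero)]
  exact mul_le_of_le_one_left (norm_nonneg _)
    (zpow_le_one_of_nonpos₀ (by exact_mod_cast (Fact.out : p.Prime).one_le) (by omega))

theorem IsIwahori.diagonal_zpow_mul_mul_diagonal_zpow_neg {M : Matrix ι ι ℚ_[p]}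
    (hM : M.IsIwahori) {c : ι → ℤ} (hc : ∀ i j, M i j ≠ 0 → c j ≤ c i) :
    (diagonal (fun i => (p : ℚ_[p]) ^ c i) * M *
      diagonal (fun i => (p : ℚ_[p]) ^ (-c i))).IsIwahori := by
  have hentry : ∀ i j, ‖(diagonal (fun i => (p : ℚ_[p]) ^ c i) * M *
      diagonal (fun i => (p : ℚ_[p]) ^ (-c i))) i j‖ ≤ ‖M i j‖ := fun i j => by
    rw [mul_diagonal, diagonal_mul]
    by_cases h : M i j = 0
    · simp [h]
    · exact norm_zpow_mul_mul_zpow_neg_le (hc i j h) _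
  refine ⟨fun i j => (hentry i j).trans (hM.norm_le_one i j),
    fun i j hij => (hentry i j).trans_lt (hM.norm_lt_one i j hij), fun i => ?_⟩
  rw [mul_diagonal, diagonal_mul, mul_right_comm, ← zpow_add₀ (Padic.p_ne_zero p),
    add_neg_cancel, zpow_zero, one_mul, hM.norm_diag]

end Padic

end Matrix

variable {p : ℕ} [Fact p.Prime] {n : ℕ}

theorem coe_dGL (a : Fin n → ℤ) :
    (dGL p n a : Matrix (Fin n) (Fin n) ℚ_[p]) = diagonal fun i => (p : ℚ_[p]) ^ a i :=
  rfl

theorem dGL_add (a b : Fin n → ℤ) : dGL p n (a + b) = dGL p n a * dGL p n b := by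
  ext : 1
  rw [Units.val_mul, coe_dGL, coe_dGL, coe_dGL, diagonal_mul_diagonal]
  simp [zpow_add₀ (Padic.p_ne_zero p)]

theorem dGL_neg (a : Fin n → ℤ) : dGL p n (-a) = (dGL p n a)⁻¹ := by
  rw [eq_inv_iff_mul_eq_one, ← dGL_add, neg_add_cancel]
  ext : 1
  simp [coe_dGL]

theorem mem_Iwahori_iff {g : GL (Fin n) ℚ_[p]} :
    g ∈ Iwahori p n ↔ (g : Matrix (Fin n) (Fin n) ℚ_[p]).IsIwahori :=
  ⟨fun ⟨h1, hdet, h2⟩ => .of_norm_det h1 h2 hdet,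
    fun h => ⟨h.norm_le_one, h.norm_det, h.norm_lt_one⟩⟩

namespace Iwahori

theorem one_mem : (1 : GL (Fin n) ℚ_[p]) ∈ Iwahori p n :=
  mem_Iwahori_iff.2 .one

theorem mul_mem {g h : GL (Fin n) ℚ_[p]} (hg : g ∈ Iwahori p n) (hh : h ∈ Iwahori p n) :
    g * h ∈ Iwahori p n :=
  mem_Iwahori_iff.2 ((mem_Iwahori_iff.1 hg).mul (mem_Iwahori_iff.1 hh))

theorem exists_upper_mul_lower {g : GL (Fin n) ℚ_[p]} (hg : g ∈ Iwahori p n) :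
    ∃ b ∈ Iwahori p n, (b : Matrix (Fin n) (Fin n) ℚ_[p]).IsUpperTriangular ∧
      ∃ v ∈ Iwahori p n, (v : Matrix (Fin n) (Fin n) ℚ_[p]).IsLowerTriangular ∧ g = b * v := by
  obtain ⟨b, v, hb, hbu, hv, hvl, hbv⟩ := (mem_Iwahori_iff.1 hg).exists_upper_mul_lower
  exact ⟨nonsingInvUnit b hb.isUnit_det, mem_Iwahori_iff.2 hb, hbu,
    nonsingInvUnit v hv.isUnit_det, mem_Iwahori_iff.2 hv, hvl, Units.ext hbv⟩

theorem dGL_mul_mul_inv_mem {g : GL (Fin n) ℚ_[p]} (hg : g ∈ Iwahori p n) {c : Fin n → ℤ}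
    (hc : ∀ i j, (g : Matrix (Fin n) (Fin n) ℚ_[p]) i j ≠ 0 → c j ≤ c i) :
    dGL p n c * g * (dGL p n c)⁻¹ ∈ Iwahori p n := by
  rw [← dGL_neg, mem_Iwahori_iff, Units.val_mul, Units.val_mul, coe_dGL, coe_dGL]
  exact (mem_Iwahori_iff.1 hg).diagonal_zpow_mul_mul_diagonal_zpow_neg hc

theorem doubleCoset_mul_doubleCoset {a a' : Fin n → ℤ} (ha : Antitone a) (ha' : Antitone a') :
    (Iwahori p n * {dGL p n a} * Iwahori p n) * (Iwahori p n * {dGL p n a'} * Iwahori p n) =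
      Iwahori p n * {dGL p n (a + a')} * Iwahori p n := by
  apply subset_antisymm
  · rintro _ ⟨_, ⟨_, ⟨g₁, hg₁, _, rfl, rfl⟩, g₂, hg₂, rfl⟩,
      _, ⟨_, ⟨g₃, hg₃, _, rfl, rfl⟩, g₄, hg₄, rfl⟩, rfl⟩
    obtain ⟨b, hb, hbu, v, hv, hvl, hbv⟩ := exists_upper_mul_lower (mul_mem hg₂ hg₃)
    have hb' : dGL p n a * b * (dGL p n a)⁻¹ ∈ Iwahori p n :=
      dGL_mul_mul_inv_mem hb fun i j hij => ha (not_lt.1 fun h => hij (hbu h))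
    have hv' : dGL p n (-a') * v * (dGL p n (-a'))⁻¹ ∈ Iwahori p n :=
      dGL_mul_mul_inv_mem hv fun i j hij => neg_le_neg (ha' (not_lt.1 fun h => hij (hvl h)))
    refine ⟨_, ⟨_, mul_mem hg₁ hb', _, rfl, rfl⟩, _, mul_mem hv' hg₄, ?_⟩
    beta_reduce
    rw [show g₁ * dGL p n a * g₂ * (g₃ * dGL p n a' * g₄) =
      g₁ * dGL p n a * (g₂ * g₃) * dGL p n a' * g₄ by group, hbv, dGL_add, dGL_neg]
    group
  · rintro _ ⟨_, ⟨g₁, hg₁, _, rfl, rfl⟩, g₂, hg₂, rfl⟩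
    refine ⟨_, ⟨_, ⟨g₁, hg₁, _, rfl, rfl⟩, 1, one_mem, rfl⟩,
      _, ⟨_, ⟨1, one_mem, _, rfl, rfl⟩, g₂, hg₂, rfl⟩, ?_⟩
    rw [dGL_add]
    group

end Iwahori

theorem doubleCoset_comm_general (p : ℕ) [Fact p.Prime] (n : ℕ)
    (a a' : Fin n → ℤ) (ha : Antitone a) (ha' : Antitone a') :
    (Iwahori p n * {dGL p n a} * Iwahori p n) *
        (Iwahori p n * {dGL p n a'} * Iwahori p n)
      = (Iwahori p n * {dGL p n a'} * Iwahori p n) *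
          (Iwahori p n * {dGL p n a} * Iwahori p n) := by
  rw [Iwahori.doubleCoset_mul_doubleCoset ha ha', Iwahori.doubleCoset_mul_doubleCoset ha' ha,
    add_comm]

/-- For decreasing tuples of integers `a` and `a'`, the Iwahori double
cosets `I d_a I` and `I d_{a'} I` commute as subsets of `GL_n(ℚ_p)`: this expresses the
commutativity of the Atkin–Lehner subalgebra of the Iwahori–Hecke algebra. -/
theorem doubleCoset_comm (p : ℕ) [Fact p.Prime] (n : ℕ) (hn : 1 ≤ n)
    (a a' : Fin n → ℤ) (ha : Antitone a) (ha' : Antitone a') :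
    (Iwahori p n * {dGL p n a} * Iwahori p n) *
        (Iwahori p n * {dGL p n a'} * Iwahori p n)
      = (Iwahori p n * {dGL p n a'} * Iwahori p n) *
          (Iwahori p n * {dGL p n a} * Iwahori p n) :=
  doubleCoset_comm_general p n a a' ha ha'
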